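/- arXiv:math/0005076 — 3 statements merged into one kernel-verified Lean document; each statement's English description precedes it below -/
import Mathlib

section
/- With P_s defined by the stated recurrence, for natural numbers i_1, i_2, j_1 with j_1 ≥ 1, the symmetrized sum P_s(i_1,i_2; j_1,0) + P_s(i_2,i_1; 0,j_1) equals 0 if s ≥ i_1 + j_1, and equals C(s,j_1) if s < i_1 + j_1. -/
/-- Binomial coefficient `C(a,b)` extended to integer top argument:
`C(a,b) = 0` when `a < 0` (and automatically `0` when `b > a ≥ 0`). -/
def Cz (a : ℤ) (b : ℕ) : ℚ := if 0 ≤ a then ((a.toNat).choose b : ℚ) else 0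

/-- `Pmat s cols` is the quantity `P_s` of the paper applied to the two-rowed
matrix whose columns are the pairs `(i, j)` in the list `cols`, defined by the
recurrence (1)–(3) of Section 2 (case (2) `P_s(i;j) = C(s,j)` for `j > 0` is the
instance `n = 1` of case (3), since the correction sum is then empty). -/
def Pmat (s : ℕ) (cols : List (ℕ × ℕ)) : ℚ :=
  if cols.all (fun c => c.2 = 0) then 0
  else
    ((cols.length.factorial : ℚ))⁻¹ * Cz (s : ℤ) ((cols.map Prod.snd).sum)
      * (((cols.map Prod.snd).sum.factorial : ℚ))
      / ((cols.map (fun c => ((c.2.factorial : ℚ)))).prod)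
    - ∑ q ∈ (Finset.Ico 1 cols.length).attach,
        Pmat s (cols.take q.1)
        * (((cols.length - q.1).factorial : ℚ))⁻¹
        * Cz ((s : ℤ) - ((cols.take q.1).map (fun c => (c.1 : ℤ) + (c.2 : ℤ))).sum)
             (((cols.drop q.1).map Prod.snd).sum)
        * ((((cols.drop q.1).map Prod.snd).sum.factorial : ℚ))
        / (((cols.drop q.1).map (fun c => ((c.2.factorial : ℚ)))).prod)
termination_by cols.length
decreasing_by
  have hq := Finset.mem_Ico.mp q.2
  simp only [List.length_take]
  omega

/-! With two columns the recurrence has the single correction term `q = 1`. For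
`(i₁,i₂; j₁,0)` it is `C(s,j₁) · C(s-i₁-j₁, 0)`, i.e. `C(s,j₁)` exactly when `i₁ + j₁ ≤ s`; for
`(i₂,i₁; 0,j₁)` it vanishes because `P_s(i₂; 0) = 0`. The two leading terms are `C(s,j₁)/2` each. -/

lemma Cz_zero_right (a : ℤ) : Cz a 0 = if 0 ≤ a then 1 else 0 := by
  simp [Cz]

lemma Cz_natCast (s j : ℕ) : Cz s j = s.choose j := by
  simp [Cz]

lemma Pmat_singleton (s i j : ℕ) (hj : j ≠ 0) : Pmat s [(i, j)] = s.choose j := by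
  rw [Pmat, Finset.sum_eq_zero fun q _ => absurd (Finset.mem_Ico.mp q.2)
    (by simp only [List.length_singleton]; omega)]
  have hfac : (j.factorial : ℚ) ≠ 0 := by positivity
  simp [hj, Cz_natCast, mul_div_assoc, div_self hfac]

lemma Pmat_singleton_zero (s i : ℕ) : Pmat s [(i, 0)] = 0 := by
  simp [Pmat]

lemma Pmat_two_cols (s a b c d : ℕ) (hbd : b ≠ 0 ∨ d ≠ 0) :
    Pmat s [(a, b), (c, d)] =
      2⁻¹ * Cz s (b + d) * (b + d).factorial / (b.factorial * d.factorial)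
        - Pmat s [(a, b)] * Cz ((s : ℤ) - (a + b)) d := by
  have hIco : (Finset.Ico 1 2).attach = {⟨1, by simp⟩} := rfl
  rw [Pmat, if_neg (by simp; omega)]
  simp only [List.length_cons, List.length_nil, zero_add, Nat.reduceAdd, hIco,
    Finset.sum_singleton]
  have hfac : (d.factorial : ℚ) ≠ 0 := by positivity
  simp [hfac, mul_div_assoc]

/-- for `j₁ ≥ 1`,
`P_s(i₁,i₂; j₁,0) + P_s(i₂,i₁; 0,j₁)` equals `0` if `s ≥ i₁ + j₁`
and equals `C(s, j₁)` if `s < i₁ + j₁`. -/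
theorem Pmat_pair (s i₁ i₂ j₁ : ℕ) (hj : 1 ≤ j₁) :
    Pmat s [(i₁, j₁), (i₂, 0)] + Pmat s [(i₂, 0), (i₁, j₁)] =
      if i₁ + j₁ ≤ s then 0 else (s.choose j₁ : ℚ) := by
  have hj₀ : j₁ ≠ 0 := by omega
  rw [Pmat_two_cols _ _ _ _ _ (.inl hj₀), Pmat_two_cols _ _ _ _ _ (.inr hj₀),
    Pmat_singleton _ _ _ hj₀, Pmat_singleton_zero, add_zero, zero_add, Cz_zero_right,
    Cz_natCast]
  split_ifs <;> first | omega | (field_simp; ring)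
end

section
/- Let m,k ≥ 1 and suppose j_1,...,j_m ≥ 1. Then the sum of P_s over all column permutations of the matrix with columns (i_1;j_1),...,(i_m;j_m),(i_{m+1};0),...,(i_{m+k};0) equals 0 if s ≥ i_1+...+i_m+j_1+...+j_m, and equals (1/k!)·(number of distinct column-orderings of ((i_{m+1},...,i_{m+k}) ; (0,...,0)))·(sum of P_s over all column permutations of the matrix with columns (i_1;j_1),...,(i_m;j_m)) if s < i_1+...+i_m+j_1+...+j_m. -/
/-- The set of matrices obtained from a matrix (list of columns) by permuting
its columns, as a `Finset` (so repeated matrices are counted once). -/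
def colPerms (M : List (ℕ × ℕ)) : Finset (List (ℕ × ℕ)) := M.permutations.toFinset

/-- `P_s[M]`: the sum of `P_s` over all matrices obtained from `M` by
permutation of columns. -/
def PmatSym (s : ℕ) (M : List (ℕ × ℕ)) : ℚ := ∑ N ∈ colPerms M, Pmat s N

open Finset
open scoped Nat

namespace Multiset

variable {α : Type*}

theorem le_of_le_add_of_forall_not {p : α → Prop} [DecidablePred p] {Q A Z : Multiset α}
    (hQ : Q ≤ A + Z) (hA : ∀ a ∈ A, ¬p a) (hZ : ∀ a ∈ Z, p a) (hQp : ∀ a ∈ Q, ¬p a) : Q ≤ A :=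
  calc Q = Q.filter (¬p ·) := (filter_eq_self.mpr hQp).symm
    _ ≤ (A + Z).filter (¬p ·) := filter_le_filter _ hQ
    _ = A := by
      rw [filter_add, filter_eq_self.mpr hA, filter_eq_nil.mpr fun a ha h => h (hZ a ha), add_zero]

variable [DecidableEq α]

def arrangements (M : Multiset α) : Finset (List α) := M.lists.toFinset

@[simp] theorem mem_arrangements {M : Multiset α} {l : List α} :
    l ∈ M.arrangements ↔ (l : Multiset α) = M := by
  rw [arrangements, mem_toFinset, mem_lists_iff, eq_comm]
  rfl

@[simp] theorem arrangements_zero : (0 : Multiset α).arrangements = {[]} := by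
  ext l
  simp

theorem arrangements_eq_biUnion {M : Multiset α} (hM : M ≠ 0) :
    M.arrangements = M.toFinset.biUnion fun a => (M.erase a).arrangements.image (a :: ·) := by
  ext l
  simp only [mem_arrangements, Finset.mem_biUnion, Finset.mem_image, mem_toFinset]
  constructor
  · rintro rfl
    cases l with
    | nil => exact absurd rfl hM
    | cons a t => exact ⟨a, by simp, t, by simp, rfl⟩
  · rintro ⟨a, ha, t, ht, rfl⟩
    rw [← cons_coe, ht, cons_erase ha]

theorem card_arrangements_eq_sum {M : Multiset α} (hM : M ≠ 0) :
    #M.arrangements = ∑ a ∈ M.toFinset, #(M.erase a).arrangements := by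
  rw [arrangements_eq_biUnion hM, card_biUnion]
  · exact sum_congr rfl fun a _ => card_image_of_injective _ List.cons_injective
  · intro a _ b _ hab
    simp only [Function.onFun, Finset.disjoint_left, Finset.mem_image]
    rintro _ ⟨u, -, rfl⟩ ⟨v, -, h⟩
    exact hab (List.cons_eq_cons.mp h).1.symm

theorem prod_factorial_count_eq_mul_prod_erase {M : Multiset α} {s : Finset α} {a : α}
    (ha : a ∈ M) (hs : a ∈ s) :
    ∏ x ∈ s, (M.count x)! = M.count a * ∏ x ∈ s, ((M.erase a).count x)! := by
  have h_ne : ∏ x ∈ s.erase a, (M.count x)! = ∏ x ∈ s.erase a, ((M.erase a).count x)! :=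
    prod_congr rfl fun x hx => by rw [count_erase_of_ne (ne_of_mem_erase hx)]
  rw [← mul_prod_erase s _ hs, ← mul_prod_erase s (fun x => ((M.erase a).count x)!) hs, h_ne,
    count_erase_self, ← mul_assoc, Nat.mul_factorial_pred (count_ne_zero.mpr ha)]

theorem card_arrangements_mul_prod_factorial_count (M : Multiset α) {s : Finset α}
    (hs : M.toFinset ⊆ s) : #M.arrangements * ∏ x ∈ s, (M.count x)! = (card M)! := by
  induction M using strongInductionOn with
  | ih M ih =>
  rcases eq_or_ne M 0 with rfl | hM
  · simp
  calc #M.arrangements * ∏ x ∈ s, (M.count x)!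
      = ∑ a ∈ M.toFinset, M.count a * (card M - 1)! := by
        rw [card_arrangements_eq_sum hM, sum_mul]
        refine sum_congr rfl fun a ha => ?_
        have ha := mem_toFinset.mp ha
        have hs' : (M.erase a).toFinset ⊆ s := (toFinset_subset.mpr (erase_subset a M)).trans hs
        rw [prod_factorial_count_eq_mul_prod_erase ha (hs (mem_toFinset.mpr ha)), mul_left_comm,
          ih _ (erase_lt.mpr ha) hs', card_erase_of_mem ha, Nat.pred_eq_sub_one]
    _ = (card M)! := by
        rw [← sum_mul, toFinset_sum_count_eq, Nat.mul_factorial_pred (Multiset.card_pos.mpr hM).ne']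

theorem card_arrangements_add_mul {R Z : Multiset α} (h : Disjoint R Z) :
    #(R + Z).arrangements * ((card R)! * (card Z)!)
      = #R.arrangements * #Z.arrangements * (card R + card Z)! := by
  set s := (R + Z).toFinset
  have count_add_factorial (x : α) : ((R + Z).count x)! = (R.count x)! * (Z.count x)! := by
    rw [count_add]
    by_cases hx : x ∈ R
    · simp [count_eq_zero_of_notMem (disjoint_left.mp h hx)]
    · simp [count_eq_zero_of_notMem hx]
  have hR := card_arrangements_mul_prod_factorial_count R (s := s) (by simp [s])
  have hZ := card_arrangements_mul_prod_factorial_count Z (s := s) (by simp [s])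
  have hRZ := card_arrangements_mul_prod_factorial_count (R + Z) (s := s) subset_rfl
  simp only [count_add_factorial, prod_mul_distrib, card_add] at hRZ
  apply Nat.eq_of_mul_eq_mul_right
    (by positivity : 0 < (∏ x ∈ s, (R.count x)!) * ∏ x ∈ s, (Z.count x)!)
  rw [← hR, ← hZ, ← hRZ]
  ring

def nontrivialSubs (M : Multiset α) : Finset (Multiset α) :=
  M.powerset.toFinset.filter fun Q => 0 < card Q ∧ card Q < card M

theorem mem_nontrivialSubs {M Q : Multiset α} :
    Q ∈ M.nontrivialSubs ↔ Q ≤ M ∧ 0 < card Q ∧ card Q < card M := by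
  simp [nontrivialSubs]

theorem sum_arrangements_sum_take_drop {β : Type*} [AddCommMonoid β] (M : Multiset α)
    (f : List α → List α → β) :
    ∑ N ∈ M.arrangements, ∑ q ∈ Finset.Ico 1 (card M), f (N.take q) (N.drop q)
      = ∑ Q ∈ M.nontrivialSubs, ∑ u ∈ Q.arrangements, ∑ v ∈ (M - Q).arrangements, f u v := by
  simp only [← sum_product']
  rw [sum_sigma']
  refine sum_nbij' (fun p => ⟨p.1.take p.2, (p.1.take p.2, p.1.drop p.2)⟩)
    (fun x => (x.2.1 ++ x.2.2, x.2.1.length)) ?_ ?_ ?_ ?_ (fun _ _ => rfl)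
  · rintro ⟨N, q⟩ hNq
    simp only [Finset.mem_product, mem_arrangements, Finset.mem_Ico] at hNq
    obtain ⟨rfl, hq1, hq2⟩ := hNq
    have hsplit : (N.take q : Multiset α) + N.drop q = N := by rw [coe_add, List.take_append_drop]
    simp only [Finset.mem_sigma, mem_nontrivialSubs, Finset.mem_product, mem_arrangements, coe_card,
      List.length_take] at hq2 ⊢
    refine ⟨⟨?_, by omega, by omega⟩, trivial, ?_⟩
    · exact hsplit ▸ le_add_right _ _
    · rw [← hsplit, add_tsub_cancel_left]
  · rintro ⟨Q, u, v⟩ h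
    simp only [Finset.mem_sigma, mem_nontrivialSubs, Finset.mem_product, mem_arrangements] at h
    obtain ⟨⟨hQM, hQ0, hQM'⟩, rfl, hv⟩ := h
    simp only [Finset.mem_product, mem_arrangements, Finset.mem_Ico, ← coe_add, coe_card, hv]
      at hQ0 hQM' ⊢
    exact ⟨add_tsub_cancel_of_le hQM, hQ0, hQM'⟩
  · rintro ⟨N, q⟩ hNq
    simp only [Finset.mem_product, mem_arrangements, Finset.mem_Ico] at hNq
    obtain ⟨rfl, hq1, hq2⟩ := hNq
    simp only [List.take_append_drop, List.length_take, Prod.mk.injEq, true_and]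
    simp only [coe_card] at hq2
    omega
  · rintro ⟨Q, u, v⟩ h
    simp only [Finset.mem_sigma, Finset.mem_product, mem_arrangements] at h
    obtain ⟨-, rfl, -⟩ := h
    simp

theorem sum_nontrivialSubs_add {β : Type*} [AddCommMonoid β] {p : α → Prop} [DecidablePred p]
    {A Z : Multiset α} (hA : ∀ a ∈ A, ¬p a) (hZ : ∀ a ∈ Z, p a) (hA0 : A ≠ 0) (hZ0 : Z ≠ 0)
    {f : Multiset α → β} (hf : ∀ Q ∈ (A + Z).nontrivialSubs, (∃ a ∈ Q, p a) → f Q = 0) :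
    ∑ Q ∈ (A + Z).nontrivialSubs, f Q = f A + ∑ Q ∈ A.nontrivialSubs, f Q := by
  have hZpos := card_pos.mpr hZ0
  have hsub : insert A A.nontrivialSubs ⊆ (A + Z).nontrivialSubs := by
    intro Q hQ
    rw [mem_nontrivialSubs, card_add]
    rcases Finset.mem_insert.mp hQ with rfl | hQ
    · exact ⟨le_add_right _ _, card_pos.mpr hA0, by omega⟩
    · obtain ⟨hQA, hQpos, hQlt⟩ := mem_nontrivialSubs.mp hQ
      exact ⟨hQA.trans (le_add_right _ _), hQpos, by omega⟩
  rw [← sum_insert fun h => (mem_nontrivialSubs.mp h).2.2.false]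
  refine (sum_subset hsub fun Q hQ hQA => hf Q hQ ?_).symm
  by_contra! hQp
  obtain ⟨hQle, hQpos, -⟩ := mem_nontrivialSubs.mp hQ
  have hQA' := le_of_le_add_of_forall_not hQle hA hZ hQp
  rcases eq_or_lt_of_le hQA' with rfl | hlt
  · exact hQA (Finset.mem_insert_self _ _)
  · exact hQA (Finset.mem_insert_of_mem (mem_nontrivialSubs.mpr ⟨hQA', hQpos, card_lt_card hlt⟩))

end Multiset

namespace Pmat

open Multiset

def jSum (M : Multiset (ℕ × ℕ)) : ℕ := (M.map Prod.snd).sum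

def weight (M : Multiset (ℕ × ℕ)) : ℕ := (M.map fun c => c.1 + c.2).sum

def factorialProd (M : Multiset (ℕ × ℕ)) : ℚ := (M.map fun c => (c.2 ! : ℚ)).prod

def coeff (t : ℤ) (R : Multiset (ℕ × ℕ)) : ℚ :=
  ((card R)! : ℚ)⁻¹ * Cz t (jSum R) * (jSum R)! / factorialProd R

def symSum (s : ℕ) (M : Multiset (ℕ × ℕ)) : ℚ := ∑ N ∈ M.arrangements, Pmat s N

theorem PmatSym_eq_symSum (s : ℕ) (L : List (ℕ × ℕ)) : PmatSym s L = symSum s L := rfl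

theorem eq_zero_of_forall_snd_eq_zero (s : ℕ) {N : List (ℕ × ℕ)} (h : ∀ c ∈ N, c.2 = 0) :
    Pmat s N = 0 := by
  rw [Pmat, if_pos (by simpa using h)]

theorem eq_coeff_sub_sum (s : ℕ) {N : List (ℕ × ℕ)} (h : ∃ c ∈ N, c.2 ≠ 0) :
    Pmat s N = coeff s N - ∑ q ∈ Finset.Ico 1 N.length,
      Pmat s (N.take q) * coeff (s - weight (N.take q)) (N.drop q) := by
  rw [Pmat, if_neg (by simpa using h), ← Finset.sum_attach (Finset.Ico 1 N.length)]
  congr 1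
  refine Finset.sum_congr rfl fun q _ => ?_
  simp only [List.map_take, List.map_drop, coeff, coe_card, List.length_drop, weight, map_coe,
    sum_coe, Nat.cast_list_sum, List.map_map, Function.comp_def, Nat.cast_add, jSum, factorialProd,
    prod_coe]
  ring

theorem symSum_eq_zero_of_forall_snd_eq_zero (s : ℕ) {M : Multiset (ℕ × ℕ)}
    (h : ∀ c ∈ M, c.2 = 0) : symSum s M = 0 :=
  Finset.sum_eq_zero fun N hN => eq_zero_of_forall_snd_eq_zero s fun c hc =>
    h c (by rw [← mem_arrangements.mp hN]; exact mem_coe.mpr hc)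

theorem symSum_eq_sub_sum (s : ℕ) {M : Multiset (ℕ × ℕ)} (h : ∃ c ∈ M, c.2 ≠ 0) :
    symSum s M = #M.arrangements * coeff s M
      - ∑ Q ∈ M.nontrivialSubs,
          symSum s Q * #(M - Q).arrangements * coeff (s - weight Q) (M - Q) := by
  have hPmat (N : List (ℕ × ℕ)) (hN : N ∈ M.arrangements) : Pmat s N = coeff s M
      - ∑ q ∈ Finset.Ico 1 (card M),
          Pmat s (N.take q) * coeff (s - weight (N.take q)) (N.drop q) := by
    obtain rfl := mem_arrangements.mp hN
    exact eq_coeff_sub_sum s (by simpa using h)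
  rw [symSum, Finset.sum_congr rfl hPmat, Finset.sum_sub_distrib, Finset.sum_const, nsmul_eq_mul,
    sum_arrangements_sum_take_drop M fun u v => Pmat s u * coeff (s - weight u) v]
  congr 1
  refine Finset.sum_congr rfl fun Q _ => ?_
  have hinner (u : List (ℕ × ℕ)) (hu : u ∈ Q.arrangements) :
      ∑ v ∈ (M - Q).arrangements, Pmat s u * coeff (s - weight u) v
        = Pmat s u * (#(M - Q).arrangements * coeff (s - weight Q) (M - Q)) := by
    rw [Finset.sum_congr rfl fun v hv => by rw [mem_arrangements.mp hv, mem_arrangements.mp hu],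
      Finset.sum_const, nsmul_eq_mul, mul_left_comm]
  rw [Finset.sum_congr rfl hinner, ← Finset.sum_mul, symSum, mul_assoc]

theorem weight_add (R Z : Multiset (ℕ × ℕ)) : weight (R + Z) = weight R + weight Z := by
  simp [weight]

theorem coeff_eq_zero_of_neg {t : ℤ} (ht : t < 0) (R : Multiset (ℕ × ℕ)) : coeff t R = 0 := by
  simp [coeff, Cz, ht.not_ge]

theorem jSum_add (R Z : Multiset (ℕ × ℕ)) : jSum (R + Z) = jSum R + jSum Z := by
  simp [jSum]

theorem factorialProd_add (R Z : Multiset (ℕ × ℕ)) :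
    factorialProd (R + Z) = factorialProd R * factorialProd Z := by
  simp [factorialProd]

theorem jSum_eq_zero {Z : Multiset (ℕ × ℕ)} (hZ : ∀ c ∈ Z, c.2 = 0) : jSum Z = 0 :=
  Multiset.sum_eq_zero fun x hx => by
    obtain ⟨c, hc, rfl⟩ := mem_map.mp hx
    exact hZ c hc

theorem factorialProd_eq_one {Z : Multiset (ℕ × ℕ)} (hZ : ∀ c ∈ Z, c.2 = 0) :
    factorialProd Z = 1 :=
  Multiset.prod_eq_one fun x hx => by
    obtain ⟨c, hc, rfl⟩ := mem_map.mp hx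
    simp [hZ c hc]

theorem factorialProd_ne_zero (R : Multiset (ℕ × ℕ)) : factorialProd R ≠ 0 :=
  prod_ne_zero fun h => by
    obtain ⟨c, -, hc⟩ := mem_map.mp h
    exact c.2.factorial_ne_zero (by exact_mod_cast hc)

theorem coeff_of_forall_snd_eq_zero (t : ℤ) {Z : Multiset (ℕ × ℕ)} (hZ : ∀ c ∈ Z, c.2 = 0) :
    coeff t Z = ((card Z)! : ℚ)⁻¹ * if 0 ≤ t then 1 else 0 := by
  simp only [coeff, jSum_eq_zero hZ, factorialProd_eq_one hZ, Cz]
  split_ifs <;> simp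

theorem card_arrangements_mul_coeff_add (t : ℤ) {R Z : Multiset (ℕ × ℕ)}
    (hR : ∀ c ∈ R, c.2 ≠ 0) (hZ : ∀ c ∈ Z, c.2 = 0) :
    #(R + Z).arrangements * coeff t (R + Z)
      = ((card Z)! : ℚ)⁻¹ * #Z.arrangements * (#R.arrangements * coeff t R) := by
  have hj : jSum (R + Z) = jSum R := by rw [jSum_add, jSum_eq_zero hZ, add_zero]
  have hf : factorialProd (R + Z) = factorialProd R := by
    rw [factorialProd_add, factorialProd_eq_one hZ, mul_one]
  have hcount : (#(R + Z).arrangements : ℚ) * ((card R)! * (card Z)!)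
      = #R.arrangements * #Z.arrangements * (card R + card Z)! := by
    exact_mod_cast card_arrangements_add_mul (disjoint_left.mpr fun hc hc' => hR _ hc (hZ _ hc'))
  have := factorialProd_ne_zero R
  simp only [coeff, hj, hf, card_add]
  field_simp
  linear_combination Cz t (jSum R) * hcount

theorem symSum_add_of_zero_column_parts_vanish (s : ℕ) {A Z : Multiset (ℕ × ℕ)}
    (hA : ∀ c ∈ A, c.2 ≠ 0) (hZ : ∀ c ∈ Z, c.2 = 0) (hA0 : A ≠ 0) (hZ0 : Z ≠ 0)
    (hvanish : ∀ Q ∈ (A + Z).nontrivialSubs, (∃ c ∈ Q, c.2 = 0) →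
      ∀ R, symSum s Q * coeff (s - weight Q) R = 0) :
    symSum s (A + Z) = if weight A ≤ s then 0
      else ((card Z)! : ℚ)⁻¹ * #Z.arrangements * symSum s A := by
  obtain ⟨a, ha⟩ := exists_mem_of_ne_zero hA0
  have hAterm : symSum s A * #((A + Z) - A).arrangements * coeff (s - weight A) ((A + Z) - A)
      = ((card Z)! : ℚ)⁻¹ * #Z.arrangements * symSum s A * if weight A ≤ s then 1 else 0 := by
    rw [add_tsub_cancel_left, coeff_of_forall_snd_eq_zero _ hZ]
    simp only [sub_nonneg, Nat.cast_le]
    ring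
  have hterm : ∀ Q ∈ A.nontrivialSubs,
      symSum s Q * #((A + Z) - Q).arrangements * coeff (s - weight Q) ((A + Z) - Q)
        = ((card Z)! : ℚ)⁻¹ * #Z.arrangements
          * (symSum s Q * #(A - Q).arrangements * coeff (s - weight Q) (A - Q)) := by
    intro Q hQ
    have hAQ : ∀ c ∈ A - Q, c.2 ≠ 0 := fun c hc => hA c (mem_of_le tsub_le_self hc)
    rw [← tsub_add_eq_add_tsub (mem_nontrivialSubs.mp hQ).1, mul_assoc,
      card_arrangements_mul_coeff_add _ hAQ hZ]
    ring
  have hrecA := symSum_eq_sub_sum s ⟨a, ha, hA a ha⟩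
  rw [symSum_eq_sub_sum s ⟨a, mem_add.mpr (.inl ha), hA a ha⟩,
    sum_nontrivialSubs_add hA hZ hA0 hZ0 fun Q hQ hQZ => by rw [mul_right_comm, hvanish Q hQ hQZ,
      zero_mul],
    hAterm, Finset.sum_congr rfl hterm, ← Finset.mul_sum, card_arrangements_mul_coeff_add _ hA hZ]
  split_ifs <;> linear_combination (-(((card Z)! : ℚ)⁻¹ * #Z.arrangements)) * hrecA

theorem symSum_add_of_forall_snd_eq_zero (s : ℕ) {A Z : Multiset (ℕ × ℕ)}
    (hA : ∀ c ∈ A, c.2 ≠ 0) (hZ : ∀ c ∈ Z, c.2 = 0) (hZ0 : Z ≠ 0) :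
    symSum s (A + Z) = if weight A ≤ s then 0
      else ((card Z)! : ℚ)⁻¹ * #Z.arrangements * symSum s A := by
  obtain ⟨M, hM⟩ : ∃ M, A + Z = M := ⟨_, rfl⟩
  induction M using Multiset.strongInductionOn generalizing A Z with
  | ih M ih =>
  subst hM
  rcases eq_or_ne A 0 with rfl | hA0
  · simp [weight, symSum_eq_zero_of_forall_snd_eq_zero s hZ]
  refine symSum_add_of_zero_column_parts_vanish s hA hZ hA0 hZ0 fun Q hQ hQZ R => ?_
  obtain ⟨hQle, -, hQlt⟩ := mem_nontrivialSubs.mp hQ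
  have hsplit : Q.filter (·.2 ≠ 0) + Q.filter (·.2 = 0) = Q := by
    rw [add_comm]; exact filter_add_not _ Q
  have hZ0' : Q.filter (·.2 = 0) ≠ 0 := by
    obtain ⟨c, hc, hc0⟩ := hQZ
    exact fun h => notMem_zero c (h ▸ mem_filter.mpr ⟨hc, hc0⟩)
  have hQ := ih Q (lt_of_le_of_ne hQle (by rintro rfl; omega)) (fun c hc => (mem_filter.mp hc).2)
    (fun c hc => (mem_filter.mp hc).2) hZ0' hsplit
  rw [hsplit] at hQ
  rw [hQ]
  split_ifs with hw
  · rw [zero_mul]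
  · have hwQ := congrArg weight hsplit
    rw [weight_add] at hwQ
    rw [coeff_eq_zero_of_neg (by omega), mul_zero]

end Pmat

theorem Pmat_lemma21_general (s : ℕ) (A : List (ℕ × ℕ)) (B : List ℕ)
    (hk : B ≠ [])
    (hA : ∀ c ∈ A, 1 ≤ c.1 ∧ 1 ≤ c.2) :
    PmatSym s (A ++ B.map (fun b => (b, 0))) =
      if (A.map (fun c => c.1 + c.2)).sum ≤ s then 0
      else ((B.length.factorial : ℚ))⁻¹
            * ((colPerms (B.map (fun b => (b, 0)))).card : ℚ)
            * PmatSym s A := by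
  have hA' : ∀ c ∈ (A : Multiset (ℕ × ℕ)), c.2 ≠ 0 := fun c hc =>
    Nat.one_le_iff_ne_zero.mp (hA c (Multiset.mem_coe.mp hc)).2
  have hZ : ∀ c ∈ (B.map (fun b => (b, 0)) : Multiset (ℕ × ℕ)), c.2 = 0 := by simp
  have hZ0 : (B.map (fun b => (b, 0)) : Multiset (ℕ × ℕ)) ≠ 0 := by simpa using hk
  rw [Pmat.PmatSym_eq_symSum, ← Multiset.coe_add,
    Pmat.symSum_add_of_forall_snd_eq_zero s hA' hZ hZ0, Pmat.PmatSym_eq_symSum]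
  simp [Pmat.weight, colPerms, Multiset.arrangements]

/-- Lemma 2.1: for a matrix with columns
`(i₁;j₁),…,(iₘ;jₘ)` (given by the list `A`, all entries positive, `m ≥ 1`)
together with columns `(i_{m+1};0),…,(i_{m+k};0)` (given by the list `B` of
positive tops, `k ≥ 1`), the symmetrized sum `P_s[⋯]` equals `0` if
`s ≥ i₁+⋯+iₘ+j₁+⋯+jₘ`, and equals
`(1/k!)·‖(i_{m+1} … i_{m+k}; 0 … 0)‖ · P_s[(i₁ … iₘ; j₁ … jₘ)]` otherwise. -/
theorem Pmat_lemma21 (s : ℕ) (A : List (ℕ × ℕ)) (B : List ℕ)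
    (hm : A ≠ []) (hk : B ≠ [])
    (hA : ∀ c ∈ A, 1 ≤ c.1 ∧ 1 ≤ c.2) (hB : ∀ b ∈ B, 1 ≤ b) :
    PmatSym s (A ++ B.map (fun b => (b, 0))) =
      if (A.map (fun c => c.1 + c.2)).sum ≤ s then 0
      else ((B.length.factorial : ℚ))⁻¹
            * ((colPerms (B.map (fun b => (b, 0)))).card : ℚ)
            * PmatSym s A :=
  Pmat_lemma21_general s A B hk hA
end

section
/- Let W satisfy the string equation ∂W = (1/2)Σ_{i+j=n} ij x_i x_j + Σ_{i≥1}(i+n)x_{i+n}∂_i W with W(0) = ∂_i W(0) = 0. Then for every ℓ with 1 ≤ ℓ < n−1 and every r ≥ 2, the restriction of ∂^r ∂_ℓ W to the set L_0 = {(x_1,...,x_{n−1},0,0,...)} vanishes, and ∂^r ∂_{n−1} W vanishes on L_0 for all r ≥ 3. -/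
/-- The partial derivative `∂_i` of a formal power series in the variables
`x_0, x_1, x_2, …` (only `x_1, x_2, …` are used), defined coefficientwise. -/
noncomputable def pd (i : ℕ) (f : MvPowerSeries ℕ ℚ) : MvPowerSeries ℕ ℚ :=
  fun m => ((m i : ℚ) + 1) * f (m + Finsupp.single i 1)

/-- The quadratic term `(1/2) Σ_{i+j=n, i,j≥1} i·j·x_i·x_j` of the string
equation. -/
noncomputable def stringQuad (n : ℕ) : MvPowerSeries ℕ ℚ :=
  (1/2 : ℚ) • ∑ p ∈ (Finset.HasAntidiagonal.antidiagonal n).filter (fun p => 1 ≤ p.1 ∧ 1 ≤ p.2),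
    ((p.1 * p.2 : ℕ) : ℚ) • (MvPowerSeries.X p.1 * MvPowerSeries.X p.2)

/-- The series `Σ_{i=1}^∞ (i+n)·x_{i+n}·∂_i W`, defined coefficientwise (for a
fixed monomial `m` only the finitely many `i` with `i+n ∈ supp m` contribute,
since `x_{i+n}` divides the `i`-th summand). -/
noncomputable def stringTail (n : ℕ) (W : MvPowerSeries ℕ ℚ) : MvPowerSeries ℕ ℚ :=
  fun m => ∑ j ∈ m.support.filter (fun j => n < j),
    (j : ℚ) * MvPowerSeries.coeff m (MvPowerSeries.X j * pd (j - n) W)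

/-- The string equation
`∂W = (1/2) Σ_{i+j=n} i j x_i x_j + Σ_{i≥1} (i+n) x_{i+n} ∂_i W`. -/
def StringEq (n : ℕ) (W : MvPowerSeries ℕ ℚ) : Prop :=
  pd 1 W = stringQuad n + stringTail n W

/-!
On a monomial `m` in `x_1, …, x_{n-1}` the tail `Σ (i+n) x_{i+n} ∂_i W` has no coefficient, so the
string equation says that the coefficient of `m · x_1` in `W` is, up to a nonzero factor, that of
`m` in the quadratic term, which is homogeneous of degree `2` and of weight `n` (with `x_j` of
weight `j`). The coefficient of `m` in `∂^r ∂_ℓ W` is a multiple of the coefficient of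
`m · x_1^r · x_ℓ` in `W`, and `m · x_1^{r-1} · x_ℓ` has degree at least `r`; for `r = 2` it is
`x_1 x_ℓ`, of weight `1 + ℓ`, which is `n` only for `ℓ = n - 1`.
-/

open MvPowerSeries Finsupp

lemma coeff_pd (i : ℕ) (f : MvPowerSeries ℕ ℚ) (m : ℕ →₀ ℕ) :
    coeff m (pd i f) = ((m i : ℚ) + 1) * coeff (m + single i 1) f := rfl

lemma coeff_iterate_pd_eq_zero {i : ℕ} {f : MvPowerSeries ℕ ℚ} {r : ℕ} {m : ℕ →₀ ℕ}
    (h : coeff (m + single i r) f = 0) : coeff m ((pd i)^[r] f) = 0 := by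
  induction r generalizing m with
  | zero => simpa using h
  | succ r ih =>
    rw [Function.iterate_succ_apply', coeff_pd, ih, mul_zero]
    rwa [add_assoc, ← single_add, add_comm 1 r]

lemma coeff_stringQuad_eq_zero {n : ℕ} {m : ℕ →₀ ℕ} (h : ¬(m.degree = 2 ∧ weight id m = n)) :
    coeff m (stringQuad n) = 0 := by
  rw [stringQuad, map_smul, map_sum, Finset.sum_eq_zero, smul_zero]
  intro p hp
  simp only [Finset.mem_filter] at hp
  rw [map_smul, X_def, X_def, monomial_mul_monomial, coeff_monomial, if_neg, smul_zero]
  rintro rfl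
  exact h ⟨by simp, by simpa [weight_single] using hp.1⟩

lemma coeff_stringTail_eq_zero {n : ℕ} (W : MvPowerSeries ℕ ℚ) {m : ℕ →₀ ℕ}
    (hm : ∀ j ∈ m.support, j ≤ n) : coeff m (stringTail n W) = 0 := by
  show ∑ j ∈ m.support.filter (fun j => n < j), _ = 0
  rw [Finset.filter_false_of_mem fun j hj => (hm j hj).not_gt, Finset.sum_empty]

lemma StringEq.coeff_add_single_one_eq_zero {n : ℕ} {W : MvPowerSeries ℕ ℚ} (hstr : StringEq n W)
    {m : ℕ →₀ ℕ} (hm : ∀ j ∈ m.support, j ≤ n) (hq : ¬(m.degree = 2 ∧ weight id m = n)) :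
    coeff (m + single 1 1) W = 0 := by
  have hcoeff := congrArg (coeff m) hstr
  rw [map_add, coeff_stringQuad_eq_zero hq, coeff_stringTail_eq_zero W hm, add_zero, coeff_pd]
    at hcoeff
  exact (mul_eq_zero.1 hcoeff).resolve_left (by positivity)

lemma StringEq.coeff_iterate_pd_one_pd_eq_zero {n : ℕ} {W : MvPowerSeries ℕ ℚ}
    (hstr : StringEq n W) (hn : 1 ≤ n) {ℓ s : ℕ} (hℓ : ℓ ≤ n) {m : ℕ →₀ ℕ}
    (hm : ∀ j ∈ m.support, j ≤ n) (hq : ¬(m.degree + s + 1 = 2 ∧ weight id m + s + ℓ = n)) :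
    coeff m ((pd 1)^[s + 1] (pd ℓ W)) = 0 := by
  refine coeff_iterate_pd_eq_zero ?_
  rw [coeff_pd, mul_eq_zero]
  right
  have hsplit : m + single 1 (s + 1) + single ℓ 1 = m + single 1 s + single ℓ 1 + single 1 1 := by
    rw [single_add]
    abel
  rw [hsplit]
  refine hstr.coeff_add_single_one_eq_zero ?_ (by simpa [weight_single, add_assoc] using hq)
  intro j hj
  rcases Finset.mem_union.1 (support_add hj) with hj | hj
  · rcases Finset.mem_union.1 (support_add hj) with hj | hj
    · exact hm j hj
    · rw [Finset.mem_singleton.1 (support_single_subset hj)]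
      exact hn
  · rwa [Finset.mem_singleton.1 (support_single_subset hj)]

theorem string_vanishing_on_L0_general (n : ℕ) (hn : 2 ≤ n) (W : MvPowerSeries ℕ ℚ)
    (hstr : StringEq n W) :
    (∀ ℓ r, 1 ≤ ℓ → ℓ < n - 1 → 2 ≤ r →
      ∀ m : ℕ →₀ ℕ, (∀ j ∈ m.support, 1 ≤ j ∧ j < n) →
        MvPowerSeries.coeff m ((pd 1)^[r] (pd ℓ W)) = 0) ∧
    (∀ r, 3 ≤ r →
      ∀ m : ℕ →₀ ℕ, (∀ j ∈ m.support, 1 ≤ j ∧ j < n) →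
        MvPowerSeries.coeff m ((pd 1)^[r] (pd (n - 1) W)) = 0) := by
  constructor
  · intro ℓ r _ hℓ hr m hm
    obtain ⟨s, rfl⟩ : ∃ s, r = s + 1 := ⟨r - 1, by omega⟩
    refine hstr.coeff_iterate_pd_one_pd_eq_zero (by omega) (by omega)
      (fun j hj => (hm j hj).2.le) ?_
    rintro ⟨hdeg, hwt⟩
    obtain rfl : m = 0 := (degree_eq_zero_iff m).1 (by omega)
    simp only [map_zero] at hwt
    omega
  · intro r hr m hm
    obtain ⟨s, rfl⟩ : ∃ s, r = s + 1 := ⟨r - 1, by omega⟩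
    exact hstr.coeff_iterate_pd_one_pd_eq_zero (by omega) (by omega)
      (fun j hj => (hm j hj).2.le) (fun h => by omega)

/-- if `W` satisfies the string equation with `W(0) = 0` and
`∂_i W(0) = 0`, then for every `1 ≤ ℓ < n−1` and `r ≥ 2` the restriction of
`∂^r ∂_ℓ W` to `L₀ = {(x₁,…,x_{n−1},0,0,…)}` vanishes (i.e. all its
coefficients at monomials supported on the variables `x₁,…,x_{n−1}` vanish),
and `∂^r ∂_{n−1} W` vanishes on `L₀` for all `r ≥ 3`. -/
theorem string_vanishing_on_L0 (n : ℕ) (hn : 2 ≤ n) (W : MvPowerSeries ℕ ℚ)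
    (h0 : MvPowerSeries.coeff 0 W = 0)
    (h1 : ∀ i, 1 ≤ i → MvPowerSeries.coeff 0 (pd i W) = 0)
    (hstr : StringEq n W) :
    (∀ ℓ r, 1 ≤ ℓ → ℓ < n - 1 → 2 ≤ r →
      ∀ m : ℕ →₀ ℕ, (∀ j ∈ m.support, 1 ≤ j ∧ j < n) →
        MvPowerSeries.coeff m ((pd 1)^[r] (pd ℓ W)) = 0) ∧
    (∀ r, 3 ≤ r →
      ∀ m : ℕ →₀ ℕ, (∀ j ∈ m.support, 1 ≤ j ∧ j < n) →
        MvPowerSeries.coeff m ((pd 1)^[r] (pd (n - 1) W)) = 0) :=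
  string_vanishing_on_L0_general n hn W hstr
end
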